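/- Missingness: if B is disconnected from A (there is no directed path from B to A in the QBAF graph), then σ(A) does not depend on τ(B), and hence the argument attribution explanation ∇|_{B→A} = 0. -/

import Mathlib

open scoped BigOperators
attribute [local instance] Classical.propDecidable

/-- The DF-QuAD combination function: given base score `t`, aggregated attacker
strength `va` and aggregated supporter strength `vs`, return the strength. -/
noncomputable def dfquad (t va vs : ℝ) : ℝ :=
  if vs ≤ va then t - t * (va - vs) else t + (1 - t) * (vs - va)

/-- A (finite, acyclic) quantitative bipolar argumentation framework. -/
structure QBAF (V : Type) [Fintype V] where
  att : V → V → Prop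
  sup : V → V → Prop
  disjoint : ∀ x y, ¬ (att x y ∧ sup x y)
  acyclic : WellFounded (fun x y => att x y ∨ sup x y)

namespace QBAF

variable {V : Type} [Fintype V]

/-- Aggregated attacker strength `v_Aa = 1 - ∏ (1 - σ X)` over attackers `X` of `A`. -/
noncomputable def vatt (Q : QBAF V) (σ : V → ℝ) (A : V) : ℝ :=
  1 - ∏ x ∈ Finset.univ.filter (fun x => Q.att x A), (1 - σ x)

/-- Aggregated supporter strength `v_As = 1 - ∏ (1 - σ X)` over supporters `X` of `A`. -/
noncomputable def vsup (Q : QBAF V) (σ : V → ℝ) (A : V) : ℝ :=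
  1 - ∏ x ∈ Finset.univ.filter (fun x => Q.sup x A), (1 - σ x)

/-- `σ` is the DF-QuAD strength function for base scores `τ`. -/
def IsStrength (Q : QBAF V) (τ σ : V → ℝ) : Prop :=
  ∀ A, σ A = dfquad (τ A) (Q.vatt σ A) (Q.vsup σ A)

/-- The edge relation of the QBAF graph. -/
def edge (Q : QBAF V) (x y : V) : Prop := Q.att x y ∨ Q.sup x y

/-- `l` is a (directed) path from `B` to `A` in the QBAF graph. -/
def IsPathFrom (Q : QBAF V) (B A : V) (l : List V) : Prop :=
  2 ≤ l.length ∧ l.Chain' Q.edge ∧ l.head? = some B ∧ l.getLast? = some A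

end QBAF

/-- The argument attribution explanation (AAE) `∇|_{B ↦ A}`: the derivative of the
strength of `A` with respect to the base score of `B`, where `σf τ'` denotes the
DF-QuAD strength function for base scores `τ'`. -/
noncomputable def AAE {V : Type} [Fintype V] (Q : QBAF V)
    (σf : (V → ℝ) → V → ℝ) (τ : V → ℝ) (B A : V) : ℝ :=
  deriv (fun δ => σf (Function.update τ B δ) A) (τ B)

namespace QBAF

variable {V : Type} [Fintype V] {Q : QBAF V}

lemma isPathFrom_pair {B A : V} (h : Q.edge B A) : Q.IsPathFrom B A [B, A] :=
  ⟨le_rfl, List.isChain_pair.2 h, rfl, rfl⟩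

lemma IsPathFrom.append_edge {B x A : V} {l : List V} (hl : Q.IsPathFrom B x l)
    (hxA : Q.edge x A) : Q.IsPathFrom B A (l ++ [A]) := by
  obtain ⟨hlen, hchain, hhead, hlast⟩ := hl
  have hne : l ≠ [] := List.ne_nil_of_length_pos (by omega)
  refine ⟨by simp only [List.length_append, List.length_singleton]; omega, ?_,
    by rwa [List.head?_append_of_ne_nil _ hne], by simp⟩
  refine hchain.append (List.isChain_singleton A) ?_
  simp only [hlast, Option.mem_def, Option.some.injEq, List.head?_cons]
  rintro _ rfl _ rfl
  exact hxA

lemma vatt_congr {σ σ' : V → ℝ} {A : V} (h : ∀ x, Q.att x A → σ x = σ' x) :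
    Q.vatt σ A = Q.vatt σ' A := by
  unfold vatt
  congr 1
  exact Finset.prod_congr rfl fun x hx => by rw [h x (Finset.mem_filter.1 hx).2]

lemma vsup_congr {σ σ' : V → ℝ} {A : V} (h : ∀ x, Q.sup x A → σ x = σ' x) :
    Q.vsup σ A = Q.vsup σ' A := by
  unfold vsup
  congr 1
  exact Finset.prod_congr rfl fun x hx => by rw [h x (Finset.mem_filter.1 hx).2]

lemma IsStrength.apply_eq_of_forall_edge {τ τ' σ σ' : V → ℝ} {A : V}
    (hσ : Q.IsStrength τ σ) (hσ' : Q.IsStrength τ' σ') (hτA : τ A = τ' A)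
    (hparents : ∀ x, Q.edge x A → σ x = σ' x) : σ A = σ' A := by
  rw [hσ A, hσ' A, hτA, vatt_congr fun x hx => hparents x (Or.inl hx),
    vsup_congr fun x hx => hparents x (Or.inr hx)]

/-- Well-founded induction along the (acyclic) edge relation: a parent of an argument
unreachable from `B` is itself unreachable from `B`, and differs from `B`. -/
theorem strength_update_eq_of_not_isPathFrom {σf : (V → ℝ) → V → ℝ}
    (hσ : ∀ τ, Q.IsStrength τ (σf τ)) (τ : V → ℝ) (B : V) (δ : ℝ) (A : V) (hBA : B ≠ A)
    (hdis : ¬ ∃ l, Q.IsPathFrom B A l) : σf (Function.update τ B δ) A = σf τ A := by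
  induction A using Q.acyclic.induction with
  | _ A ih =>
    refine (hσ _).apply_eq_of_forall_edge (hσ τ) (Function.update_of_ne hBA.symm _ _) ?_
    intro x hxA
    have hBx : B ≠ x := by
      rintro rfl
      exact hdis ⟨_, isPathFrom_pair hxA⟩
    exact ih x hxA hBx fun ⟨l, hl⟩ => hdis ⟨_, hl.append_edge hxA⟩

end QBAF

theorem missingness_general {V : Type} [Fintype V] (Q : QBAF V)
    (σf : (V → ℝ) → V → ℝ) (hσ : ∀ τ, Q.IsStrength τ (σf τ))
    (τ : V → ℝ)
    (A B : V) (hBA : B ≠ A) (hdis : ¬ ∃ l, Q.IsPathFrom B A l) :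
    (∀ δ : ℝ, σf (Function.update τ B δ) A = σf τ A) ∧ AAE Q σf τ B A = 0 := by
  have hconst : ∀ δ : ℝ, σf (Function.update τ B δ) A = σf τ A :=
    fun δ => QBAF.strength_update_eq_of_not_isPathFrom hσ τ B δ A hBA hdis
  refine ⟨hconst, ?_⟩
  rw [AAE, funext hconst, deriv_const]

/-- missingness. If `B` is disconnected from `A` (no directed path from
`B` to `A`), then `σ(A)` does not depend on `τ(B)` and `∇|_{B ↦ A} = 0`. -/
theorem missingness {V : Type} [Fintype V] (Q : QBAF V)
    (σf : (V → ℝ) → V → ℝ) (hσ : ∀ τ, Q.IsStrength τ (σf τ))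
    (τ : V → ℝ) (hτ : ∀ x, τ x ∈ Set.Icc (0:ℝ) 1)
    (A B : V) (hBA : B ≠ A) (hdis : ¬ ∃ l, Q.IsPathFrom B A l) :
    (∀ δ : ℝ, σf (Function.update τ B δ) A = σf τ A) ∧ AAE Q σf τ B A = 0 :=
  missingness_general Q σf hσ τ A B hBA hdis
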